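/- Let G be a finite group with unitary representations on finite-dimensional spaces H_A and H_B, and let the diagonal twirl on H_A ⊗ H_B be 𝔥(X) = (1/|G|) ∑_h (U_A(h) ⊗ U_B(h)) X (U_A(h) ⊗ U_B(h))†. Then for any operators a on H_A and b on H_B, the twirled operators 𝔥(a ⊗ Id) and 𝔥(Id ⊗ b) commute. -/
import Mathlib

open Kronecker

noncomputable def diagTwirl {G : Type*} [Group G] [Fintype G] {m n : ℕ}
    (UA : G →* Matrix.unitaryGroup (Fin m) ℂ) (UB : G →* Matrix.unitaryGroup (Fin n) ℂ)
    (X : Matrix (Fin m × Fin n) (Fin m × Fin n) ℂ) : Matrix (Fin m × Fin n) (Fin m × Fin n) ℂ :=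
  (Fintype.card G : ℂ)⁻¹ •
    ∑ h : G, ((UA h : Matrix (Fin m) (Fin m) ℂ) ⊗ₖ (UB h : Matrix (Fin n) (Fin n) ℂ)) * X *
      star ((UA h : Matrix (Fin m) (Fin m) ℂ) ⊗ₖ (UB h : Matrix (Fin n) (Fin n) ℂ))

private lemma star_kron {m n : ℕ} (A : Matrix (Fin m) (Fin m) ℂ) (B : Matrix (Fin n) (Fin n) ℂ) :
    star (A ⊗ₖ B) = star A ⊗ₖ star B := by
  ext ⟨i,j⟩ ⟨k,l⟩
  simp [Matrix.star_apply, Matrix.kronecker_apply, mul_comm]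

private lemma sum_kron {m n : ℕ} {G : Type*} [Fintype G] (f : G → Matrix (Fin m) (Fin m) ℂ)
    (B : Matrix (Fin n) (Fin n) ℂ) : ∑ h : G, f h ⊗ₖ B = (∑ h : G, f h) ⊗ₖ B := by
  ext ⟨i,j⟩ ⟨k,l⟩
  simp [Matrix.kronecker_apply, Finset.sum_mul, Matrix.sum_apply]

private lemma kron_sum {m n : ℕ} {G : Type*} [Fintype G] (A : Matrix (Fin m) (Fin m) ℂ)
    (f : G → Matrix (Fin n) (Fin n) ℂ) : ∑ h : G, A ⊗ₖ f h = A ⊗ₖ (∑ h : G, f h) := by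
  ext ⟨i,j⟩ ⟨k,l⟩
  simp [Matrix.kronecker_apply, Finset.mul_sum, Matrix.sum_apply]

private lemma twirl_left {G : Type*} [Group G] [Fintype G] {m n : ℕ}
    (UA : G →* Matrix.unitaryGroup (Fin m) ℂ) (UB : G →* Matrix.unitaryGroup (Fin n) ℂ)
    (a : Matrix (Fin m) (Fin m) ℂ) :
    diagTwirl UA UB (a ⊗ₖ (1 : Matrix (Fin n) (Fin n) ℂ)) =
      ((Fintype.card G : ℂ)⁻¹ • ∑ h : G, (UA h : Matrix (Fin m) (Fin m) ℂ) * a *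
        star (UA h : Matrix (Fin m) (Fin m) ℂ)) ⊗ₖ (1 : Matrix (Fin n) (Fin n) ℂ) := by
  unfold diagTwirl
  rw [Matrix.smul_kronecker, ← sum_kron]
  congr 2
  ext h
  rw [star_kron, ← Matrix.mul_kronecker_mul, ← Matrix.mul_kronecker_mul, mul_one,
    (Unitary.mem_iff.mp (UB h).prop).2]

private lemma twirl_right {G : Type*} [Group G] [Fintype G] {m n : ℕ}
    (UA : G →* Matrix.unitaryGroup (Fin m) ℂ) (UB : G →* Matrix.unitaryGroup (Fin n) ℂ)
    (b : Matrix (Fin n) (Fin n) ℂ) :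
    diagTwirl UA UB ((1 : Matrix (Fin m) (Fin m) ℂ) ⊗ₖ b) =
      (1 : Matrix (Fin m) (Fin m) ℂ) ⊗ₖ ((Fintype.card G : ℂ)⁻¹ •
        ∑ h : G, (UB h : Matrix (Fin n) (Fin n) ℂ) * b *
        star (UB h : Matrix (Fin n) (Fin n) ℂ)) := by
  unfold diagTwirl
  rw [Matrix.kronecker_smul, ← kron_sum]
  congr 2
  ext h
  rw [star_kron, ← Matrix.mul_kronecker_mul, ← Matrix.mul_kronecker_mul, mul_one,
    (Unitary.mem_iff.mp (UA h).prop).2]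

/-- The twirled operators `𝔥(a ⊗ Id)` and `𝔥(Id ⊗ b)` commute, for any operators
`a` on `H_A` and `b` on `H_B`. -/
theorem diagTwirl_tensor_commute
    {G : Type*} [Group G] [Fintype G] {m n : ℕ}
    (UA : G →* Matrix.unitaryGroup (Fin m) ℂ) (UB : G →* Matrix.unitaryGroup (Fin n) ℂ)
    (a : Matrix (Fin m) (Fin m) ℂ) (b : Matrix (Fin n) (Fin n) ℂ) :
    Commute (diagTwirl UA UB (a ⊗ₖ (1 : Matrix (Fin n) (Fin n) ℂ)))
      (diagTwirl UA UB ((1 : Matrix (Fin m) (Fin m) ℂ) ⊗ₖ b)) := by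
  rw [twirl_left, twirl_right]
  unfold Commute SemiconjBy
  rw [← Matrix.mul_kronecker_mul, ← Matrix.mul_kronecker_mul]
  simp
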